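/- arXiv:2111.12978 — 2 statements merged into one kernel-verified Lean document; each statement's English description precedes it below -/
import Mathlib

section
/- Canonical truth lemma for atoms: let Γ be a maximally L′_C-consistent set of L′_C formulas, [X⃗:=x⃗] an assignment, Y a variable and y ∈ R(Y). Then [X⃗:=x⃗]Y=y ∈ Γ if and only if the canonical model ⟨F^Γ, A^Γ⟩ satisfies [X⃗:=x⃗]Y=y, i.e., if and only if the valuation obtained by intervening with [X⃗:=x⃗] on ⟨F^Γ, A^Γ⟩ assigns y to Y. -/
open Classical

/-- A finite signature: variables sorted into exogenous and endogenous, each with a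
finite nonempty range of values. -/
structure Sig : Type 1 where
  Var : Type
  exo : Var → Prop
  Val : Var → Type
  [decEqVar : DecidableEq Var]
  [finVar : Fintype Var]
  [neVar : Nonempty Var]
  [decEqVal : ∀ X : Var, DecidableEq (Val X)]
  [finVal : ∀ X : Var, Fintype (Val X)]
  [neVal : ∀ X : Var, Nonempty (Val X)]

attribute [instance] Sig.decEqVar Sig.finVar Sig.neVar Sig.decEqVal Sig.finVal Sig.neVal

variable {S : Sig}

/-- A valuation: a value for each variable. -/
abbrev Env (S : Sig) : Type := ∀ X : S.Var, S.Val X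

instance : Nonempty (Env S) := ⟨fun X => Classical.arbitrary (S.Val X)⟩

/-- Values for all variables other than `V`. -/
abbrev Others (S : Sig) (V : S.Var) : Type := ∀ X : {X : S.Var // X ≠ V}, S.Val X.val

/-- The restriction of a valuation to the variables other than `V`. -/
def Env.restrict (A : Env S) (V : S.Var) : Others S V := fun X => A X.val

/-- A family of structural functions (only the components at endogenous variables
are meaningful). -/
abbrev StructFuns (S : Sig) : Type := ∀ V : S.Var, Others S V → S.Val V

/-- A valuation complies with the structural functions: the value of each endogenous
variable is obtained by applying its structural function to the values of all
other variables. -/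
def Complies (F : StructFuns S) (A : Env S) : Prop :=
  ∀ V : S.Var, ¬ S.exo V → A V = F V (A.restrict V)

/-- The endogenous variable `V` is directly causally affected by `X` under `F`. -/
def DirAff (F : StructFuns S) (X V : S.Var) : Prop :=
  ¬ S.exo V ∧ ∃ (h : X ≠ V) (g : Others S V) (x₁ x₂ : S.Val X),
    x₁ ≠ x₂ ∧
      F V (Function.update g ⟨X, h⟩ x₁) ≠ F V (Function.update g ⟨X, h⟩ x₂)

/-- `F` is recursive: the transitive closure of the direct causal dependence
relation is asymmetric (transitivity is automatic for `Relation.TransGen`). -/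
def RecursiveF (F : StructFuns S) : Prop :=
  ∀ a b : S.Var, Relation.TransGen (DirAff F) a b → ¬ Relation.TransGen (DirAff F) b a

/-- An assignment of values to a set of pairwise distinct variables. -/
abbrev Intervention (S : Sig) : Type := ∀ X : S.Var, Option (S.Val X)

/-- The empty assignment. -/
def iEmpty (S : Sig) : Intervention S := fun _ => none

/-- Extend an assignment by additionally setting `Y` to `y` (overriding). -/
def iUpd (I : Intervention S) (Y : S.Var) (y : S.Val Y) : Intervention S :=
  Function.update I Y (some y)

/-- Combine assignments, the second overriding the first:  `[X⃗ := x⃗, Y⃗ := y⃗]`. -/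
def icomp (I J : Intervention S) : Intervention S := fun W =>
  match J W with
  | some v => some v
  | none => I W

/-- The intervened family of structural functions: intervened variables get the
constant function returning the assigned value; the rest are unchanged. -/
def intF (F : StructFuns S) (I : Intervention S) : StructFuns S :=
  fun V g => (I V).getD (F V g)

/-- `A'` is the result of intervening with `I` on the valuation `A` (w.r.t. `F`):
exogenous intervened variables get the assigned value, exogenous non-intervened
variables keep their value, and each endogenous variable complies with its new
structural function. -/
def IntervenedVal (F : StructFuns S) (A : Env S) (I : Intervention S) (A' : Env S) : Prop :=
  (∀ X : S.Var, S.exo X → ∀ v : S.Val X, I X = some v → A' X = v) ∧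
  (∀ X : S.Var, S.exo X → I X = none → A' X = A X) ∧
  (∀ V : S.Var, ¬ S.exo V → A' V = intF F I V (A'.restrict V))

/-- The intervened valuation (unique when `F` is recursive). -/
noncomputable def intVal (F : StructFuns S) (A : Env S) (I : Intervention S) : Env S :=
  Classical.epsilon (IntervenedVal F A I)

/-- The language L_C: atoms `Y = y`, negation, conjunction, interventionist
counterfactual operators. -/
inductive Form (S : Sig) : Type where
  | eq (Y : S.Var) (y : S.Val Y) : Form S
  | neg (φ : Form S) : Form S
  | conj (φ ψ : Form S) : Form S
  | int (I : Intervention S) (φ : Form S) : Form S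

namespace Form

/-- Material implication, defined from `¬` and `∧` as usual. -/
def impl (φ ψ : Form S) : Form S := Form.neg (Form.conj φ (Form.neg ψ))

/-- Disjunction, defined from `¬` and `∧` as usual. -/
def orF (φ ψ : Form S) : Form S := Form.neg (Form.conj (Form.neg φ) (Form.neg ψ))

/-- Biconditional. -/
def iffF (φ ψ : Form S) : Form S := Form.conj (impl φ ψ) (impl ψ φ)

end Form

/-- A canonical contradiction. -/
noncomputable def botF (S : Sig) : Form S :=
  let X : S.Var := Classical.arbitrary S.Var
  let x : S.Val X := Classical.arbitrary (S.Val X)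
  Form.conj (Form.eq X x) (Form.neg (Form.eq X x))

/-- A canonical tautology. -/
noncomputable def topF (S : Sig) : Form S := Form.neg (botF S)

/-- Disjunction of a list of formulas (the empty disjunction is a contradiction). -/
noncomputable def bigOr : List (Form S) → Form S
  | [] => botF S
  | φ :: l => l.foldl Form.orF φ

/-- Conjunction of a list of formulas (the empty conjunction is a tautology). -/
noncomputable def bigConj : List (Form S) → Form S
  | [] => topF S
  | φ :: l => l.foldl Form.conj φ

/-- `φ` is an instance of a propositional tautology: it evaluates to `true` under
every Boolean valuation that respects negation and conjunction (treating all
other formulas as atoms). -/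
def Tauto (φ : Form S) : Prop :=
  ∀ v : Form S → Bool,
    (∀ ψ : Form S, v (Form.neg ψ) = !(v ψ)) →
    (∀ ψ χ : Form S, v (Form.conj ψ χ) = (v ψ && v χ)) →
    v φ = true

/-- The assignment `[Z⃗ := z⃗, X := x]` where `Z⃗` lists all variables other than
`X` and `V`, used in the formula `X ⇝ V`. -/
def ltInt (X V : S.Var) (g : ∀ W : {W : S.Var // W ≠ X ∧ W ≠ V}, S.Val W.val)
    (x : S.Val X) : Intervention S := fun W =>
  if h : W = X then some (h.symm ▸ x)
  else if h' : W = V then none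
  else some (g ⟨W, ⟨h, h'⟩⟩)

/-- The formula `X ⇝ V`: the disjunction, over tuples `z⃗` of values for all
variables other than `X` and `V`, distinct values `x₁ ≠ x₂` of `X` and distinct
values `v₁ ≠ v₂` of `V`, of `[Z⃗:=z⃗, X:=x₁]V=v₁ ∧ [Z⃗:=z⃗, X:=x₂]V=v₂`. -/
noncomputable def leadsTo (X V : S.Var) : Form S :=
  bigOr ((Finset.univ.filter
      (fun p : (∀ W : {W : S.Var // W ≠ X ∧ W ≠ V}, S.Val W.val) ×
          (S.Val X × S.Val X) × (S.Val V × S.Val V) =>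
        p.2.1.1 ≠ p.2.1.2 ∧ p.2.2.1 ≠ p.2.2.2)).toList.map
    (fun p =>
      Form.conj
        (Form.int (ltInt X V p.1 p.2.1.1) (Form.eq V p.2.2.1))
        (Form.int (ltInt X V p.1 p.2.1.2) (Form.eq V p.2.2.2))))

/-- The chain `X₀ ⇝ X₁ ∧ ⋯ ∧ X_k ⇝ X_{k+1}`. -/
noncomputable def chainConj (X : ℕ → S.Var) : ℕ → Form S
  | 0 => leadsTo (X 0) (X 1)
  | n + 1 => Form.conj (chainConj X n) (leadsTo (X (n + 1)) (X (n + 2)))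

/-- `ψ₁ → (ψ₂ → ⋯ → (ψₙ → φ))` for a list of premises. -/
def impsFrom : List (Form S) → Form S → Form S
  | [], φ => φ
  | ψ :: l, φ => Form.impl ψ (impsFrom l φ)

/-- Satisfaction of an L_C formula in a causal model `⟨F, A⟩`. -/
def SatC : Form S → StructFuns S → Env S → Prop
  | Form.eq Y y, _, A => A Y = y
  | Form.neg φ, F, A => ¬ SatC φ F A
  | Form.conj φ ψ, F, A => SatC φ F A ∧ SatC ψ F A
  | Form.int I φ, F, A => SatC φ (intF F I) (intVal F A I)

/-- The proof system L′_C: propositional tautologies, modus ponens, and the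
axiom schemes A1–A7. -/
inductive ThmC' : Form S → Prop where
  | taut : ∀ {φ : Form S}, Tauto φ → ThmC' φ
  | mp : ∀ {φ ψ : Form S}, ThmC' (Form.impl φ ψ) → ThmC' φ → ThmC' ψ
  | a1 : ∀ (I : Intervention S) (Y : S.Var) (y y' : S.Val Y), y ≠ y' →
      ThmC' (Form.impl (Form.int I (Form.eq Y y)) (Form.neg (Form.int I (Form.eq Y y'))))
  | a2 : ∀ (I : Intervention S) (Y : S.Var),
      ThmC' (bigOr (((Finset.univ : Finset (S.Val Y)).toList).map
        (fun y => Form.int I (Form.eq Y y))))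
  | a3 : ∀ (I : Intervention S) (Y Z : S.Var) (y : S.Val Y) (z : S.Val Z),
      ThmC' (Form.impl (Form.conj (Form.int I (Form.eq Y y)) (Form.int I (Form.eq Z z)))
        (Form.int (iUpd I Y y) (Form.eq Z z)))
  | a4 : ∀ (I : Intervention S) (Y : S.Var) (y : S.Val Y),
      ThmC' (Form.int (iUpd I Y y) (Form.eq Y y))
  | a5 : ∀ (I : Intervention S) (Y Z : S.Var) (y : S.Val Y) (z : S.Val Z), Y ≠ Z →
      ThmC' (Form.impl
        (Form.conj (Form.int (iUpd I Y y) (Form.eq Z z)) (Form.int (iUpd I Z z) (Form.eq Y y)))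
        (Form.int I (Form.eq Z z)))
  | a6 : ∀ (X : ℕ → S.Var) (k : ℕ),
      (∀ i : ℕ, i ≤ k → X i ≠ X (i + 1)) → X (k + 1) ≠ X 0 →
      ThmC' (Form.impl (chainConj X k) (Form.neg (leadsTo (X (k + 1)) (X 0))))
  | a7 : ∀ (I : Intervention S) (U : S.Var) (u : S.Val U), S.exo U → I U = none →
      ThmC' (Form.iffF (Form.int (iEmpty S) (Form.eq U u)) (Form.int I (Form.eq U u)))

/-- Strong derivability from a set of premises in L′_C. -/
def ProvC' (Γ : Set (Form S)) (φ : Form S) : Prop :=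
  ∃ l : List (Form S), (∀ ψ ∈ l, ψ ∈ Γ) ∧ ThmC' (impsFrom l φ)

/-- The language L′_C: Boolean combinations of formulas `[X⃗:=x⃗]Y=y`. -/
inductive IsC' : Form S → Prop where
  | intEq : ∀ (I : Intervention S) (Y : S.Var) (y : S.Val Y),
      IsC' (Form.int I (Form.eq Y y))
  | neg : ∀ {φ : Form S}, IsC' φ → IsC' (Form.neg φ)
  | conj : ∀ {φ ψ : Form S}, IsC' φ → IsC' ψ → IsC' (Form.conj φ ψ)

/-- `Γ` is L′_C-consistent. -/
def ConsistentC' (Γ : Set (Form S)) : Prop :=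
  ¬ ∃ φ : Form S, ProvC' Γ φ ∧ ProvC' Γ (Form.neg φ)

/-- `Γ` is a maximally L′_C-consistent set of L′_C formulas. -/
def MCS (Γ : Set (Form S)) : Prop :=
  (∀ φ ∈ Γ, IsC' φ) ∧ ConsistentC' Γ ∧ ∀ φ : Form S, IsC' φ → (φ ∈ Γ ∨ Form.neg φ ∈ Γ)

/-- The assignment setting every variable other than `V` to its value under `g`. -/
def fullIntOf {V : S.Var} (g : Others S V) : Intervention S :=
  fun W => if h : W = V then none else some (g ⟨W, h⟩)

/-- The canonical structural functions of a maximally consistent set `Γ`: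
`F^Γ_V(u⃗, y⃗) = v` iff `[U⃗:=u⃗, Y⃗:=y⃗]V=v ∈ Γ` (where `U⃗, Y⃗` list all variables
other than `V`); axioms A1 and A2 make this well defined. -/
noncomputable def canonF (Γ : Set (Form S)) : StructFuns S :=
  fun V g => Classical.epsilon (fun v : S.Val V => Form.int (fullIntOf g) (Form.eq V v) ∈ Γ)

/-- The canonical valuation of a maximally consistent set `Γ`:
`A^Γ(Z) = z` iff `[]Z=z ∈ Γ`; axioms A1 and A2 make this well defined. -/
noncomputable def canonA (Γ : Set (Form S)) : Env S :=
  fun X => Classical.epsilon (fun x : S.Val X => Form.int (iEmpty S) (Form.eq X x) ∈ Γ)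


/-! Maximality together with A1 and A2 makes `{z | [I]Z=z ∈ Γ}` a singleton for every
intervention `I` and variable `Z`, so `Γ` determines a valuation `canonVal Γ I`. By A4 and A7 it
gives intervened variables their assigned values and untouched exogenous ones their canonical
values. By A3, intervening on a variable with its own value changes nothing, so one may intervene
on every variable other than a non-intervened `V` with its value: hence `canonVal Γ I` complies with
the intervened canonical functions and is an intervened valuation of `⟨F^Γ, A^Γ⟩`. Finally A6
forbids causal cycles of `F^Γ`, and for recursive functions intervened valuations are unique (by
well-founded induction along the causal order), so it is the valuation chosen by `intVal`. -/

theorem Relation.TransGen.exists_seq {α : Type*} {r : α → α → Prop} {a b : α}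
    (h : Relation.TransGen r a b) :
    ∃ (m : ℕ) (X : ℕ → α), 0 < m ∧ X 0 = a ∧ X m = b ∧ ∀ i < m, r (X i) (X (i + 1)) := by
  induction h with
  | @single c hac =>
    refine ⟨1, fun i => if i = 0 then a else c, one_pos, rfl, rfl, fun i hi => ?_⟩
    obtain rfl : i = 0 := by omega
    simpa using hac
  | @tail c d _ hcd ih =>
    obtain ⟨m, X, -, h0, hmc, hX⟩ := ih
    refine ⟨m + 1, fun i => if i ≤ m then X i else d, by omega, by simp [h0], by simp,
      fun i hi => ?_⟩
    rcases Nat.lt_or_eq_of_le (Nat.le_of_lt_succ hi) with hi | rfl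
    · simpa [hi.le, Nat.succ_le_of_lt hi] using hX i hi
    · simpa [hmc] using hcd

theorem DirAff.of_intF {F : StructFuns S} {I : Intervention S} {X V : S.Var}
    (h : DirAff (intF F I) X V) : DirAff F X V := by
  obtain ⟨hV, hXV, g, x₁, x₂, hx, hne⟩ := h
  cases hIV : I V with
  | some v => simp [intF, hIV] at hne
  | none => exact ⟨hV, hXV, g, x₁, x₂, hx, by simpa [intF, hIV] using hne⟩

theorem RecursiveF.intF {F : StructFuns S} (hF : RecursiveF F) (I : Intervention S) :
    RecursiveF (_root_.intF F I) :=
  have hmono := Relation.TransGen.mono fun _ _ (h : DirAff (_root_.intF F I) _ _) => h.of_intF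
  fun a b hab hba => hF a b (hmono a b hab) (hmono b a hba)

theorem RecursiveF.wellFounded {F : StructFuns S} (hF : RecursiveF F) :
    WellFounded (Relation.TransGen (DirAff F)) :=
  have : IsTrans S.Var (Relation.TransGen (DirAff F)) := ⟨fun _ _ _ => .trans⟩
  have : Std.Irrefl (Relation.TransGen (DirAff F)) := ⟨fun a ha => hF a a ha ha⟩
  Finite.wellFounded_of_trans_of_irrefl _

theorem apply_eq_of_eqOn_dirAff {F : StructFuns S} {V : S.Var} (hV : ¬ S.exo V)
    {g g' : Others S V} (h : ∀ W : {X : S.Var // X ≠ V}, DirAff F W.1 V → g W = g' W) :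
    F V g = F V g' := by
  suffices ∀ (s : Finset {X : S.Var // X ≠ V}) (g : Others S V),
      (∀ W : {X : S.Var // X ≠ V}, DirAff F W.1 V → g W = g' W) → (∀ W ∉ s, g W = g' W) →
        F V g = F V g' from this Finset.univ g h (by simp)
  intro s
  induction s using Finset.induction_on with
  | empty => exact fun g _ hout => congrArg (F V) (funext fun W => hout W (by simp))
  | insert a s _ ih =>
    intro g hdir hout
    have hstep : F V g = F V (Function.update g a (g' a)) := by
      by_cases hga : g a = g' a
      · rw [← hga, Function.update_eq_self]
      · by_contra hne
        exact hga (hdir a ⟨hV, a.2, g, g a, g' a, hga, by rwa [Function.update_eq_self]⟩)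
    rw [hstep]
    refine ih _ (fun W hW => ?_) (fun W hW => ?_) <;> by_cases hWa : W = a
    · subst hWa; simp
    · simpa [hWa] using hdir W hW
    · subst hWa; simp
    · simpa [hWa, hW] using hout W

theorem Complies.eq_of_recursiveF {F : StructFuns S} (hF : RecursiveF F) {A B : Env S}
    (hA : Complies F A) (hB : Complies F B) (hexo : ∀ X : S.Var, S.exo X → A X = B X) :
    A = B := by
  funext V
  induction V using hF.wellFounded.induction with
  | _ V ih =>
    by_cases hV : S.exo V
    · exact hexo V hV
    · rw [hA V hV, hB V hV]
      exact apply_eq_of_eqOn_dirAff hV fun W hW => ih W.1 (.single hW)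

theorem intVal_eq_of_intervenedVal {F : StructFuns S} (hF : RecursiveF F) {A A' : Env S}
    {I : Intervention S} (h : IntervenedVal F A I A') : intVal F A I = A' := by
  have h₀ : IntervenedVal F A I (intVal F A I) := Classical.epsilon_spec ⟨A', h⟩
  refine Complies.eq_of_recursiveF (hF.intF I) h₀.2.2 h.2.2 fun X hX => ?_
  cases hIX : I X with
  | some x => rw [h₀.1 X hX x hIX, h.1 X hX x hIX]
  | none => rw [h₀.2.1 X hX hIX, h.2.1 X hX hIX]

/-- The Boolean valuations quantified over in `Tauto`. -/
structure RespectsConnectives (v : Form S → Bool) : Prop where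
  neg : ∀ ψ : Form S, v (Form.neg ψ) = !(v ψ)
  conj : ∀ ψ χ : Form S, v (Form.conj ψ χ) = (v ψ && v χ)

namespace RespectsConnectives

variable {v : Form S → Bool}

theorem impl (hv : RespectsConnectives v) (φ ψ : Form S) :
    v (Form.impl φ ψ) = (!(v φ) || v ψ) := by
  simp [Form.impl, hv.neg, hv.conj]

theorem orF (hv : RespectsConnectives v) (φ ψ : Form S) :
    v (Form.orF φ ψ) = (v φ || v ψ) := by
  simp [Form.orF, hv.neg, hv.conj]

theorem botF (hv : RespectsConnectives v) : v (botF S) = false := by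
  simp [_root_.botF, hv.neg, hv.conj]

theorem topF (hv : RespectsConnectives v) : v (topF S) = true := by
  simp [_root_.topF, hv.neg, hv.botF]

theorem impsFrom (hv : RespectsConnectives v) (l : List (Form S)) (φ : Form S) :
    v (_root_.impsFrom l φ) = true ↔ ((∀ ψ ∈ l, v ψ = true) → v φ = true) := by
  induction l with
  | nil => simp [_root_.impsFrom]
  | cons a l ih =>
    rw [_root_.impsFrom, hv.impl, Bool.or_eq_true_iff, ih]
    by_cases ha : v a = true <;> simp [ha]

theorem bigOr (hv : RespectsConnectives v) (l : List (Form S)) :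
    v (_root_.bigOr l) = l.any v := by
  cases l with
  | nil => simp [_root_.bigOr, hv.botF]
  | cons a l =>
    rw [_root_.bigOr, List.any_cons]
    induction l generalizing a with
    | nil => simp
    | cons b l ih => simp [ih, hv.orF, Bool.or_assoc]

end RespectsConnectives

theorem thmC'_topF : ThmC' (topF S) :=
  .taut fun _ hneg hconj => RespectsConnectives.topF ⟨hneg, hconj⟩

theorem provC'_of_entails {Γ : Set (Form S)} {χ φ : Form S} (hχ : ThmC' χ)
    {l : List (Form S)} (hl : ∀ ψ ∈ l, ψ ∈ Γ)
    (h : ∀ v, RespectsConnectives v → v χ = true → (∀ ψ ∈ l, v ψ = true) → v φ = true) :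
    ProvC' Γ φ := by
  refine ⟨l, hl, .mp (.taut fun v hneg hconj => ?_) hχ⟩
  have hv : RespectsConnectives v := ⟨hneg, hconj⟩
  rw [hv.impl, Bool.or_eq_true_iff, hv.impsFrom]
  by_cases hvχ : v χ = true
  · exact .inr (h v hv hvχ)
  · exact .inl (by simpa using hvχ)

theorem isC'_bigOr {l : List (Form S)} (hne : l ≠ []) (h : ∀ ψ ∈ l, IsC' ψ) :
    IsC' (bigOr l) := by
  cases l with
  | nil => exact absurd rfl hne
  | cons a l =>
    rw [bigOr]
    induction l generalizing a with
    | nil => exact h a (by simp)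
    | cons b l ih =>
      refine ih (Form.orF a b) (by simp) fun ψ hψ => ?_
      rcases List.mem_cons.mp hψ with rfl | hψ
      · exact .neg (.conj (.neg (h a (by simp))) (.neg (h b (by simp))))
      · exact h ψ (by simp [hψ])

namespace MCS

variable {Γ : Set (Form S)}

theorem false_of_entails_false (hΓ : MCS Γ) {χ : Form S} (hχ : ThmC' χ) {l : List (Form S)}
    (hl : ∀ ψ ∈ l, ψ ∈ Γ)
    (h : ∀ v, RespectsConnectives v → v χ = true → (∀ ψ ∈ l, v ψ = true) → False) : False :=
  hΓ.2.1 ⟨topF S, provC'_of_entails hχ hl fun _ hv _ _ => hv.topF,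
    provC'_of_entails hχ hl fun v hv hvχ hvl => (h v hv hvχ hvl).elim⟩

theorem mem_of_entails (hΓ : MCS Γ) {φ χ : Form S} (hφ : IsC' φ) (hχ : ThmC' χ)
    {l : List (Form S)} (hl : ∀ ψ ∈ l, ψ ∈ Γ)
    (h : ∀ v, RespectsConnectives v → v χ = true → (∀ ψ ∈ l, v ψ = true) → v φ = true) :
    φ ∈ Γ := by
  refine (hΓ.2.2 φ hφ).resolve_right fun hneg => ?_
  refine hΓ.false_of_entails_false hχ (l := Form.neg φ :: l)
    (List.forall_mem_cons.mpr ⟨hneg, hl⟩) ?_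
  intro v hv hvχ hvl
  have hvneg := hvl (Form.neg φ) List.mem_cons_self
  simp [hv.neg, h v hv hvχ fun ψ hψ => hvl ψ (List.mem_cons_of_mem _ hψ)] at hvneg

theorem conj_mem (hΓ : MCS Γ) {φ ψ : Form S} (hφ : φ ∈ Γ) (hψ : ψ ∈ Γ) :
    Form.conj φ ψ ∈ Γ :=
  hΓ.mem_of_entails (.conj (hΓ.1 φ hφ) (hΓ.1 ψ hψ)) thmC'_topF (l := [φ, ψ]) (by simp [hφ, hψ])
    fun v hv _ hvl => by simp [hv.conj, hvl φ (by simp), hvl ψ (by simp)]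

theorem bigOr_mem (hΓ : MCS Γ) {l : List (Form S)} (hl : ∀ ψ ∈ l, IsC' ψ) {φ : Form S}
    (hφl : φ ∈ l) (hφ : φ ∈ Γ) : bigOr l ∈ Γ :=
  hΓ.mem_of_entails (isC'_bigOr (List.ne_nil_of_mem hφl) hl) thmC'_topF (l := [φ])
    (by simpa using hφ)
    fun v hv _ hvl => by rw [hv.bigOr]; exact List.any_eq_true.mpr ⟨φ, hφl, hvl φ (by simp)⟩

theorem exists_atom_mem (hΓ : MCS Γ) (I : Intervention S) (Y : S.Var) :
    ∃ y : S.Val Y, Form.int I (Form.eq Y y) ∈ Γ := by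
  by_contra! h
  refine hΓ.false_of_entails_false (ThmC'.a2 I Y)
    (l := Finset.univ.toList.map fun y => Form.neg (Form.int I (Form.eq Y y))) ?_ ?_
  · simp only [List.mem_map, Finset.mem_toList, Finset.mem_univ, true_and]
    rintro _ ⟨y, rfl⟩
    exact (hΓ.2.2 _ (.intEq I Y y)).resolve_left (h y)
  · intro v hv ha2 hvl
    rw [hv.bigOr, List.any_eq_true] at ha2
    obtain ⟨_, hψ, hvψ⟩ := ha2
    obtain ⟨y, hy, rfl⟩ := List.mem_map.mp hψ
    have := hvl _ (List.mem_map_of_mem (f := fun y => Form.neg (Form.int I (Form.eq Y y))) hy)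
    simp [hv.neg, hvψ] at this

theorem atom_unique (hΓ : MCS Γ) {I : Intervention S} {Y : S.Var} {y y' : S.Val Y}
    (h : Form.int I (Form.eq Y y) ∈ Γ) (h' : Form.int I (Form.eq Y y') ∈ Γ) : y = y' := by
  by_contra hne
  refine hΓ.false_of_entails_false (ThmC'.a1 I Y y y' hne)
    (l := [Form.int I (Form.eq Y y), Form.int I (Form.eq Y y')]) (by simp [h, h']) ?_
  intro v hv ha1 hvl
  simp [hv.impl, hv.neg, hvl _ List.mem_cons_self, hvl (Form.int I (Form.eq Y y')) (by simp)] at ha1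

end MCS

/-- The valuation that `Γ` assigns to the intervention `I`; in particular
`canonA Γ = canonVal Γ (iEmpty S)` and `canonF Γ V g = canonVal Γ (fullIntOf g) V`. -/
noncomputable def canonVal (Γ : Set (Form S)) (I : Intervention S) : Env S :=
  fun Z => Classical.epsilon fun z : S.Val Z => Form.int I (Form.eq Z z) ∈ Γ

theorem fullIntOf_update_eq_ltInt {X V : S.Var} (hXV : X ≠ V) (g : Others S V)
    (x : S.Val X) :
    fullIntOf (Function.update g ⟨X, hXV⟩ x) = ltInt X V (fun W => g ⟨W.1, W.2.2⟩) x := by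
  funext W
  by_cases hWV : W = V
  · subst hWV; simp [fullIntOf, ltInt, Ne.symm hXV]
  · by_cases hWX : W = X
    · subst hWX; simp [fullIntOf, ltInt, hWV]
    · simp only [fullIntOf, ltInt, dif_neg hWV, dif_neg hWX]
      exact congrArg some (Function.update_of_ne (fun he => hWX (congrArg Subtype.val he)) _ _)

namespace MCS

variable {Γ : Set (Form S)}

theorem mem_iff_canonVal_eq (hΓ : MCS Γ) {I : Intervention S} {Z : S.Var} {z : S.Val Z} :
    Form.int I (Form.eq Z z) ∈ Γ ↔ canonVal Γ I Z = z := by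
  have hspec : Form.int I (Form.eq Z (canonVal Γ I Z)) ∈ Γ :=
    Classical.epsilon_spec (hΓ.exists_atom_mem I Z)
  exact ⟨hΓ.atom_unique hspec, fun h => h ▸ hspec⟩

theorem canonVal_of_eq_some (hΓ : MCS Γ) {I : Intervention S} {X : S.Var} {x : S.Val X}
    (h : I X = some x) : canonVal Γ I X = x := by
  have ha4 := ThmC'.a4 I X x
  rw [iUpd, ← h, Function.update_eq_self] at ha4
  exact hΓ.mem_iff_canonVal_eq.mp <| hΓ.mem_of_entails (.intEq _ _ _) ha4 (l := [])
    (by simp) fun _ _ hv _ => hv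

theorem canonVal_of_exo (hΓ : MCS Γ) {I : Intervention S} {X : S.Var} (hX : S.exo X)
    (h : I X = none) : canonVal Γ I X = canonA Γ X := by
  refine hΓ.mem_iff_canonVal_eq.mp <| hΓ.mem_of_entails (.intEq _ _ _) (ThmC'.a7 I X (canonA Γ X) hX h)
    (l := [Form.int (iEmpty S) (Form.eq X (canonA Γ X))])
    (List.forall_mem_singleton.mpr (hΓ.mem_iff_canonVal_eq.mpr rfl)) fun v hv ha7 hvl => ?_
  simp [Form.iffF, hv.conj, hv.impl, hvl _ List.mem_cons_self] at ha7
  exact ha7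

theorem canonVal_iUpd_self (hΓ : MCS Γ) (I : Intervention S) (W : S.Var) :
    canonVal Γ (iUpd I W (canonVal Γ I W)) = canonVal Γ I := by
  funext Z
  refine hΓ.mem_iff_canonVal_eq.mp <| hΓ.mem_of_entails (.intEq _ _ _) (ThmC'.a3 I W Z (canonVal Γ I W) (canonVal Γ I Z))
    (l := [Form.int I (Form.eq W (canonVal Γ I W)), Form.int I (Form.eq Z (canonVal Γ I Z))])
    (by simp [hΓ.mem_iff_canonVal_eq]) fun v hv ha3 hvl => ?_
  simpa [hv.impl, hv.conj, hvl _ List.mem_cons_self,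
    hvl (Form.int I (Form.eq Z (canonVal Γ I Z))) (by simp)] using ha3

theorem canonVal_fill (hΓ : MCS Γ) (I : Intervention S) (s : Finset S.Var) :
    canonVal Γ (fun W => if W ∈ s then some (canonVal Γ I W) else I W) = canonVal Γ I := by
  induction s using Finset.induction_on with
  | empty => simp
  | insert a s _ ih =>
    conv_rhs => rw [← ih, ← hΓ.canonVal_iUpd_self _ a, ih]
    congr 1
    funext W
    by_cases hWa : W = a
    · subst hWa; simp [iUpd]
    · simp [iUpd, hWa]

theorem canonVal_complies (hΓ : MCS Γ) {I : Intervention S} {V : S.Var} (hV : I V = none) :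
    canonVal Γ I V = canonF Γ V ((canonVal Γ I).restrict V) := by
  have hfill : fullIntOf ((canonVal Γ I).restrict V) =
      fun W => if W ∈ Finset.univ.erase V then some (canonVal Γ I W) else I W := by
    funext W
    by_cases hWV : W = V
    · subst hWV; simp [fullIntOf, hV]
    · simp [fullIntOf, Env.restrict, hWV]
  change _ = canonVal Γ (fullIntOf _) V
  rw [hfill, hΓ.canonVal_fill]

theorem intervenedVal_canonVal (hΓ : MCS Γ) (I : Intervention S) :
    IntervenedVal (canonF Γ) (canonA Γ) I (canonVal Γ I) := by
  refine ⟨fun X _ x h => hΓ.canonVal_of_eq_some h, fun X hX h => hΓ.canonVal_of_exo hX h,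
    fun V _ => ?_⟩
  cases hIV : I V with
  | some v => simp [intF, hIV, hΓ.canonVal_of_eq_some hIV]
  | none => simpa [intF, hIV] using hΓ.canonVal_complies hIV

theorem leadsTo_mem (hΓ : MCS Γ) {X V : S.Var} (h : DirAff (canonF Γ) X V) :
    leadsTo X V ∈ Γ := by
  obtain ⟨-, hXV, g, x₁, x₂, hx, hv⟩ := h
  have hmem (x : S.Val X) : Form.int (ltInt X V (fun W => g ⟨W.1, W.2.2⟩) x)
      (Form.eq V (canonF Γ V (Function.update g ⟨X, hXV⟩ x))) ∈ Γ := by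
    rw [← fullIntOf_update_eq_ltInt hXV]
    exact hΓ.mem_iff_canonVal_eq.mpr rfl
  rw [leadsTo]
  refine hΓ.bigOr_mem ?_ (List.mem_map_of_mem (Finset.mem_toList.mpr (Finset.mem_filter.mpr
    ⟨Finset.mem_univ ⟨fun W => g ⟨W.1, W.2.2⟩, (x₁, x₂), (_, _)⟩, hx, hv⟩)))
    (hΓ.conj_mem (hmem x₁) (hmem x₂))
  simp only [List.mem_map]
  rintro _ ⟨p, -, rfl⟩
  exact .conj (.intEq _ _ _) (.intEq _ _ _)

theorem chainConj_mem (hΓ : MCS Γ) {X : ℕ → S.Var} {k : ℕ}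
    (h : ∀ i ≤ k, DirAff (canonF Γ) (X i) (X (i + 1))) : chainConj X k ∈ Γ := by
  induction k with
  | zero => exact hΓ.leadsTo_mem (h 0 le_rfl)
  | succ k ih =>
    exact hΓ.conj_mem (ih fun i hi => h i (by omega)) (hΓ.leadsTo_mem (h (k + 1) le_rfl))

theorem canonF_recursive (hΓ : MCS Γ) : RecursiveF (canonF Γ) := by
  intro a b hab hba
  obtain ⟨m, X, hm, h0, hma, hX⟩ := (hab.trans hba).exists_seq
  have hne (i : ℕ) (hi : i < m) : X i ≠ X (i + 1) := (hX i hi).2.fst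
  have hm2 : 2 ≤ m := by
    by_contra! hlt
    obtain rfl : m = 1 := by omega
    exact hne 0 one_pos (h0.trans hma.symm)
  obtain ⟨k, rfl⟩ := Nat.exists_eq_add_of_le' hm2
  have hcycle : X (k + 1 + 1) = X 0 := hma.trans h0.symm
  refine hΓ.false_of_entails_false
    (ThmC'.a6 X k (fun i hi => hne i (by omega)) (hcycle ▸ hne (k + 1) (by omega)))
    (l := [chainConj X k, leadsTo (X (k + 1)) (X 0)])
    (by simp [hΓ.chainConj_mem fun i (hi : i ≤ k) => hX i (by omega),
      hcycle ▸ hΓ.leadsTo_mem (hX (k + 1) (by omega))]) ?_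
  intro v hv ha6 hvl
  simp [hv.impl, hv.neg, hvl _ List.mem_cons_self,
    hvl (leadsTo (X (k + 1)) (X 0)) (by simp)] at ha6

end MCS

/-- Theorem (canonical truth lemma for atoms): `[X⃗:=x⃗]Y=y ∈ Γ` iff the canonical
model `⟨F^Γ, A^Γ⟩` satisfies `[X⃗:=x⃗]Y=y`, i.e. iff the valuation obtained by
intervening with `[X⃗:=x⃗]` on `⟨F^Γ, A^Γ⟩` assigns `y` to `Y`. -/
theorem canonical_truth_lemma_atoms (S : Sig) (Γ : Set (Form S)) (hΓ : MCS Γ)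
    (I : Intervention S) (Y : S.Var) (y : S.Val Y) :
    Form.int I (Form.eq Y y) ∈ Γ ↔
      SatC (Form.int I (Form.eq Y y)) (canonF Γ) (canonA Γ) := by
  rw [SatC, SatC, intVal_eq_of_intervenedVal hΓ.canonF_recursive (hΓ.intervenedVal_canonVal I)]
  exact hΓ.mem_iff_canonVal_eq
end

section
/- Canonical truth lemma for L′_C: let Γ be a maximally L′_C-consistent set of L′_C formulas. Then for every L′_C formula γ, the canonical recursive causal model ⟨F^Γ, A^Γ⟩ satisfies γ if and only if γ ∈ Γ. -/
open Classical

variable {S : Sig}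

/-! ### Auxiliary development for the truth lemma -/

section BoolVal

variable (v : Form S → Bool)
  (hn : ∀ ψ : Form S, v (Form.neg ψ) = !v ψ)
  (hc : ∀ ψ χ : Form S, v (Form.conj ψ χ) = (v ψ && v χ))

include hn hc

lemma v_impl (φ ψ : Form S) : v (Form.impl φ ψ) = (!v φ || v ψ) := by
  simp [Form.impl, hn, hc]

lemma v_orF (φ ψ : Form S) : v (Form.orF φ ψ) = (v φ || v ψ) := by
  simp [Form.orF, hn, hc]

lemma v_botF : v (botF S) = false := by
  rw [botF]; rw [hc, hn]; simp

lemma v_foldl_or : ∀ (l : List (Form S)) (a : Form S),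
    v (l.foldl Form.orF a) = (v a || l.any v)
  | [], a => by simp
  | b :: l, a => by
      rw [List.foldl_cons, v_foldl_or l, v_orF v hn hc]
      simp [Bool.or_assoc]

lemma v_bigOr : ∀ l : List (Form S), v (bigOr l) = l.any v
  | [] => by simp [bigOr, v_botF v hn hc]
  | a :: l => by rw [bigOr, v_foldl_or v hn hc]; simp

lemma v_impsFrom : ∀ (l : List (Form S)) (φ : Form S),
    v (impsFrom l φ) = (!(l.all v) || v φ)
  | [], φ => by simp [impsFrom]
  | ψ :: l, φ => by
      rw [impsFrom, v_impl v hn hc, v_impsFrom l]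
      simp [Bool.or_assoc]

end BoolVal

section Tauts

lemma taut_id (φ : Form S) : Tauto (Form.impl φ φ) := by
  intro v hn hc; rw [v_impl v hn hc]; cases v φ <;> simp

lemma taut_mp_combine (l1 l2 : List (Form S)) (φ ψ : Form S) :
    Tauto (Form.impl (impsFrom l1 (Form.impl φ ψ))
      (Form.impl (impsFrom l2 φ) (impsFrom (l1 ++ l2) ψ))) := by
  intro v hn hc
  rw [v_impl v hn hc, v_impl v hn hc, v_impsFrom v hn hc, v_impsFrom v hn hc,
    v_impsFrom v hn hc, v_impl v hn hc, List.all_append]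
  cases l1.all v <;> cases l2.all v <;> cases v φ <;> cases v ψ <;> simp

lemma taut_conj_intro (φ ψ : Form S) :
    Tauto (Form.impl φ (Form.impl ψ (Form.conj φ ψ))) := by
  intro v hn hc
  rw [v_impl v hn hc, v_impl v hn hc, hc]
  cases v φ <;> cases v ψ <;> simp

lemma taut_conj_left (φ ψ : Form S) : Tauto (Form.impl (Form.conj φ ψ) φ) := by
  intro v hn hc
  rw [v_impl v hn hc, hc]
  cases v φ <;> cases v ψ <;> simp

lemma taut_conj_right (φ ψ : Form S) : Tauto (Form.impl (Form.conj φ ψ) ψ) := by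
  intro v hn hc
  rw [v_impl v hn hc, hc]
  cases v φ <;> cases v ψ <;> simp

lemma taut_disjunct {l : List (Form S)} {φ : Form S} (h : φ ∈ l) :
    Tauto (Form.impl φ (bigOr l)) := by
  intro v hn hc
  rw [v_impl v hn hc, v_bigOr v hn hc]
  cases hv : v φ
  · simp
  · simp [List.any_eq_true.mpr ⟨φ, h, hv⟩]

lemma taut_neg_bigOr (l : List (Form S)) :
    Tauto (impsFrom (l.map Form.neg) (Form.neg (bigOr l))) := by
  intro v hn hc
  rw [v_impsFrom v hn hc, hn, v_bigOr v hn hc]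
  have h : (l.map Form.neg).all v = !l.any v := by
    induction l with
    | nil => simp
    | cons a l ih => simp [hn, ih]
  rw [h]; cases l.any v <;> simp

end Tauts

section Prov

variable {Γ : Set (Form S)}

lemma prov_of_thm {φ : Form S} (h : ThmC' φ) : ProvC' Γ φ :=
  ⟨[], by simp, h⟩

lemma prov_of_mem {φ : Form S} (h : φ ∈ Γ) : ProvC' Γ φ :=
  ⟨[φ], by simp [h], ThmC'.taut (taut_id φ)⟩

lemma prov_mp {φ ψ : Form S} (h1 : ProvC' Γ (Form.impl φ ψ)) (h2 : ProvC' Γ φ) :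
    ProvC' Γ ψ := by
  obtain ⟨l1, hl1, t1⟩ := h1
  obtain ⟨l2, hl2, t2⟩ := h2
  refine ⟨l1 ++ l2, ?_, ?_⟩
  · intro x hx
    rcases List.mem_append.mp hx with h | h
    exacts [hl1 _ h, hl2 _ h]
  · exact ThmC'.mp (ThmC'.mp (ThmC'.taut (taut_mp_combine l1 l2 φ ψ)) t1) t2

lemma prov_conj {φ ψ : Form S} (h1 : ProvC' Γ φ) (h2 : ProvC' Γ ψ) :
    ProvC' Γ (Form.conj φ ψ) :=
  prov_mp (prov_mp (prov_of_thm (ThmC'.taut (taut_conj_intro φ ψ))) h1) h2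

variable (hΓ : MCS Γ)

include hΓ

lemma not_both {φ : Form S} (h1 : ProvC' Γ φ) (h2 : ProvC' Γ (Form.neg φ)) : False :=
  hΓ.2.1 ⟨φ, h1, h2⟩

lemma mem_of_prov {φ : Form S} (h : ProvC' Γ φ) (hC : IsC' φ) : φ ∈ Γ := by
  rcases hΓ.2.2 φ hC with h' | h'
  · exact h'
  · exact absurd (prov_of_mem h') (fun h'' => not_both hΓ h h'')

lemma negF_mem_iff {φ : Form S} (hC : IsC' φ) : Form.neg φ ∈ Γ ↔ φ ∉ Γ := by
  constructor
  · intro h1 h2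
    exact not_both hΓ (prov_of_mem h2) (prov_of_mem h1)
  · intro h1
    rcases hΓ.2.2 φ hC with h' | h'
    · exact absurd h' h1
    · exact h'

lemma conj_mem_iff {φ ψ : Form S} (hφ : IsC' φ) (hψ : IsC' ψ) :
    Form.conj φ ψ ∈ Γ ↔ φ ∈ Γ ∧ ψ ∈ Γ := by
  constructor
  · intro h
    exact ⟨mem_of_prov hΓ (prov_mp (prov_of_thm (ThmC'.taut (taut_conj_left φ ψ)))
        (prov_of_mem h)) hφ,
      mem_of_prov hΓ (prov_mp (prov_of_thm (ThmC'.taut (taut_conj_right φ ψ)))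
        (prov_of_mem h)) hψ⟩
  · intro ⟨h1, h2⟩
    exact mem_of_prov hΓ (prov_conj (prov_of_mem h1) (prov_of_mem h2)) (IsC'.conj hφ hψ)

/-- A1 + A2: for each intervention and variable there is a unique value whose
atomic formula lies in `Γ`. -/
lemma exists_unique_val (I : Intervention S) (Y : S.Var) :
    ∃! y : S.Val Y, Form.int I (Form.eq Y y) ∈ Γ := by
  have hex : ∃ y : S.Val Y, Form.int I (Form.eq Y y) ∈ Γ := by
    by_contra hno
    push_neg at hno
    set l : List (Form S) :=
      ((Finset.univ : Finset (S.Val Y)).toList).map (fun y => Form.int I (Form.eq Y y))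
    have hneg : ProvC' Γ (Form.neg (bigOr l)) := by
      refine ⟨l.map Form.neg, ?_, ?_⟩
      · intro ψ hψ
        rw [List.mem_map] at hψ
        obtain ⟨χ, hχ, rfl⟩ := hψ
        rw [List.mem_map] at hχ
        obtain ⟨y, _, rfl⟩ := hχ
        rcases hΓ.2.2 (Form.int I (Form.eq Y y)) (IsC'.intEq I Y y) with h | h
        · exact absurd h (hno y)
        · exact h
      · exact ThmC'.taut (taut_neg_bigOr l)
    exact not_both hΓ (prov_of_thm (ThmC'.a2 I Y)) hneg
  obtain ⟨y, hy⟩ := hex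
  refine ⟨y, hy, ?_⟩
  intro y' hy'
  by_contra hne
  exact not_both hΓ (prov_of_mem hy)
    (prov_mp (prov_of_thm (ThmC'.a1 I Y y' y hne)) (prov_of_mem hy'))

end Prov

section Canon

variable {Γ : Set (Form S)}

/-- The valuation obtained from `Γ` after intervention `I`. -/
noncomputable def AI (Γ : Set (Form S)) (I : Intervention S) : Env S :=
  fun Z => Classical.epsilon (fun z : S.Val Z => Form.int I (Form.eq Z z) ∈ Γ)

variable (hΓ : MCS Γ)

include hΓ

lemma AI_spec (I : Intervention S) (Z : S.Var) :
    Form.int I (Form.eq Z (AI Γ I Z)) ∈ Γ :=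
  Classical.epsilon_spec (exists_unique_val hΓ I Z).exists

lemma AI_eq {I : Intervention S} {Z : S.Var} {z : S.Val Z}
    (h : Form.int I (Form.eq Z z) ∈ Γ) : AI Γ I Z = z :=
  (exists_unique_val hΓ I Z).unique (AI_spec hΓ I Z) h

lemma canonF_spec (V : S.Var) (g : Others S V) :
    Form.int (fullIntOf g) (Form.eq V (canonF Γ V g)) ∈ Γ :=
  Classical.epsilon_spec (exists_unique_val hΓ (fullIntOf g) V).exists

lemma canonF_eq {V : S.Var} {g : Others S V} {v : S.Val V}
    (h : Form.int (fullIntOf g) (Form.eq V v) ∈ Γ) : canonF Γ V g = v :=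
  (exists_unique_val hΓ (fullIntOf g) V).unique (canonF_spec hΓ V g) h

omit hΓ

lemma canonA_eq_AI : canonA Γ = AI Γ (iEmpty S) := rfl

lemma fullIntOf_update {V X : S.Var} (h : X ≠ V) (g : Others S V) (x : S.Val X) :
    fullIntOf (Function.update g ⟨X, h⟩ x)
      = ltInt X V (fun W => g ⟨W.1, W.2.2⟩) x := by
  funext W
  rw [fullIntOf, ltInt]
  by_cases hWX : W = X
  · subst hWX
    rw [dif_neg h, dif_pos rfl]
    exact congrArg some (Function.update_self _ _ _)
  · by_cases hWV : W = V
    · rw [dif_pos hWV, dif_neg hWX, dif_pos hWV]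
    · rw [dif_neg hWV, dif_neg hWX, dif_neg hWV]
      exact congrArg some (Function.update_of_ne (by simp [hWX]) _ _)

include hΓ

lemma prov_leadsTo_of_dirAff {X V : S.Var}
    (h : DirAff (canonF Γ) X V) : ProvC' Γ (leadsTo X V) := by
  obtain ⟨hV, hXV, g, x₁, x₂, hx, hF⟩ := h
  set v₁ := canonF Γ V (Function.update g ⟨X, hXV⟩ x₁) with hv₁
  set v₂ := canonF Γ V (Function.update g ⟨X, hXV⟩ x₂) with hv₂
  have h1 : Form.int (ltInt X V (fun W => g ⟨W.1, W.2.2⟩) x₁) (Form.eq V v₁) ∈ Γ := by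
    rw [← fullIntOf_update hXV]
    exact canonF_spec hΓ V _
  have h2 : Form.int (ltInt X V (fun W => g ⟨W.1, W.2.2⟩) x₂) (Form.eq V v₂) ∈ Γ := by
    rw [← fullIntOf_update hXV]
    exact canonF_spec hΓ V _
  rw [leadsTo]
  refine prov_mp (prov_of_thm (ThmC'.taut (taut_disjunct ?_)))
    (prov_conj (prov_of_mem h1) (prov_of_mem h2))
  refine List.mem_map.mpr ⟨⟨fun W => g ⟨W.1, W.2.2⟩, (x₁, x₂), (v₁, v₂)⟩, ?_, rfl⟩
  rw [Finset.mem_toList, Finset.mem_filter]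
  exact ⟨Finset.mem_univ _, hx, hF⟩

lemma prov_chainConj (X : ℕ → S.Var) (k : ℕ)
    (h : ∀ i, i ≤ k → ProvC' Γ (leadsTo (X i) (X (i + 1)))) :
    ProvC' Γ (chainConj X k) := by
  induction k with
  | zero => rw [chainConj]; exact h 0 le_rfl
  | succ k ih =>
      rw [chainConj]
      exact prov_conj (ih (fun i hi => h i (hi.trans (Nat.le_succ k)))) (h (k + 1) le_rfl)

omit hΓ

lemma transGen_chain {α : Type*} {r : α → α → Prop} {a b : α}
    (h : Relation.TransGen r a b) :
    ∃ (n : ℕ) (f : ℕ → α), f 0 = a ∧ f (n + 1) = b ∧ ∀ i ≤ n, r (f i) (f (i + 1)) := by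
  induction h with
  | single hab =>
      rename_i c
      refine ⟨0, fun i => if i = 0 then a else c, by simp, by simp, ?_⟩
      intro i hi
      interval_cases i
      simpa using hab
  | tail hab hbc ih =>
      rename_i b c
      obtain ⟨n, f, h0, h1, hs⟩ := ih
      refine ⟨n + 1, fun i => if i ≤ n + 1 then f i else c, ?_, ?_, ?_⟩
      · simpa using h0
      · simp
      · intro i hi
        rcases Nat.lt_or_ge i (n + 1) with hlt | hge
        · have hi1 : i + 1 ≤ n + 1 := hlt
          simp only [if_pos (hi : i ≤ n + 1), if_pos hi1]
          exact hs i (Nat.lt_succ_iff.mp hlt)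
        · have : i = n + 1 := le_antisymm hi hge
          subst this
          simp only [if_pos le_rfl, if_neg (by omega : ¬ n + 1 + 1 ≤ n + 1)]
          rw [h1]
          exact hbc

include hΓ

lemma recursive_canonF : RecursiveF (canonF Γ) := by
  intro a b hab hba
  obtain ⟨n, f, h0, h1, hs⟩ := transGen_chain (hab.trans hba)
  cases n with
  | zero =>
      have hd := hs 0 le_rfl
      obtain ⟨-, hne, -⟩ := hd
      rw [h0, h1] at hne
      exact hne rfl
  | succ m =>
      have hne1 : ∀ i ≤ m, f i ≠ f (i + 1) := by
        intro i hi
        obtain ⟨-, hne, -⟩ := hs i (hi.trans (Nat.le_succ m))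
        exact hne
      have hdlast := hs (m + 1) le_rfl
      rw [h1, ← h0] at hdlast
      have hne2 : f (m + 1) ≠ f 0 := by
        obtain ⟨-, hne, -⟩ := hdlast
        exact hne
      have hchain : ProvC' Γ (chainConj f m) :=
        prov_chainConj hΓ f m (fun i hi =>
          prov_leadsTo_of_dirAff hΓ (hs i (hi.trans (Nat.le_succ m))))
      have hneg : ProvC' Γ (Form.neg (leadsTo (f (m + 1)) (f 0))) :=
        prov_mp (prov_of_thm (ThmC'.a6 f m hne1 hne2)) hchain
      have hpos : ProvC' Γ (leadsTo (f (m + 1)) (f 0)) :=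
        prov_leadsTo_of_dirAff hΓ hdlast
      exact not_both hΓ hpos hneg

end Canon

section Unique

variable {F : StructFuns S}

lemma indep_of_not_dirAff {X V : S.Var} (hV : ¬ S.exo V) (hXV : X ≠ V)
    (h : ¬ DirAff F X V) (g : Others S V) (x₁ x₂ : S.Val X) :
    F V (Function.update g ⟨X, hXV⟩ x₁) = F V (Function.update g ⟨X, hXV⟩ x₂) := by
  by_contra hne
  by_cases hx : x₁ = x₂
  · subst hx; exact hne rfl
  · exact h ⟨hV, hXV, g, x₁, x₂, hx, hne⟩

lemma F_congr_aux {V : S.Var} (hV : ¬ S.exo V) :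
    ∀ (s : Finset {X : S.Var // X ≠ V}) (g g' : Others S V),
      (∀ p, p ∉ s → g p = g' p) →
      (∀ p : {X : S.Var // X ≠ V}, DirAff F p.1 V → g p = g' p) →
      F V g = F V g' := by
  intro s
  induction s using Finset.induction_on with
  | empty =>
      intro g g' h _
      exact congrArg (F V) (funext fun p => h p (Finset.notMem_empty p))
  | @insert p s hp ih =>
      intro g g' hout haff
      have h1 : F V g = F V (Function.update g p (g' p)) := by
        by_cases hd : DirAff F p.1 V
        · rw [← haff p hd, Function.update_eq_self]
        · conv_lhs => rw [← Function.update_eq_self p g]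
          exact indep_of_not_dirAff hV p.2 hd g (g p) (g' p)
      rw [h1]
      refine ih (Function.update g p (g' p)) g' ?_ ?_
      · intro q hq
        by_cases hqp : q = p
        · subst hqp; exact Function.update_self _ _ _
        · rw [Function.update_of_ne hqp]
          exact hout q (by simp [hqp, hq])
      · intro q hd
        by_cases hqp : q = p
        · subst hqp; exact Function.update_self _ _ _
        · rw [Function.update_of_ne hqp]; exact haff q hd

lemma intervenedVal_unique (hrec : RecursiveF F) {A : Env S} {I : Intervention S}
    {A' A'' : Env S} (h' : IntervenedVal F A I A') (h'' : IntervenedVal F A I A'') :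
    A' = A'' := by
  have hwf : WellFounded (DirAff F) := by
    have ht : IsTrans S.Var (Relation.TransGen (DirAff F)) :=
      ⟨fun _ _ _ h1 h2 => h1.trans h2⟩
    have hi : IsIrrefl S.Var (Relation.TransGen (DirAff F)) :=
      ⟨fun a h => hrec a a h h⟩
    exact Subrelation.wf (fun h => Relation.TransGen.single h)
      (Finite.wellFounded_of_trans_of_irrefl _)
  refine funext fun V => hwf.induction (C := fun W => A' W = A'' W) V ?_
  intro V ih
  by_cases hexo : S.exo V
  · cases hI : I V with
    | some v => rw [h'.1 V hexo v hI, h''.1 V hexo v hI]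
    | none => rw [h'.2.1 V hexo hI, h''.2.1 V hexo hI]
  · rw [h'.2.2 V hexo, h''.2.2 V hexo, intF, intF]
    cases hI : I V with
    | some v => rfl
    | none =>
        simp only [Option.getD_none]
        exact F_congr_aux hexo Finset.univ (A'.restrict V) (A''.restrict V)
          (fun p hp => absurd (Finset.mem_univ p) hp)
          (fun p hd => ih p.1 hd)

end Unique

section Witness

variable {Γ : Set (Form S)} (hΓ : MCS Γ)

include hΓ

lemma AI_of_some {I : Intervention S} {X : S.Var} {v : S.Val X} (hI : I X = some v) :
    AI Γ I X = v := by
  have he : iUpd I X v = I := by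
    funext W
    by_cases h : W = X
    · subst h; rw [iUpd, Function.update_self, hI]
    · rw [iUpd, Function.update_of_ne h]
  have h4 := ThmC'.a4 I X v
  rw [he] at h4
  exact AI_eq hΓ (mem_of_prov hΓ (prov_of_thm h4) (IsC'.intEq _ _ _))

lemma AI_of_none_exo {I : Intervention S} {X : S.Var} (hexo : S.exo X) (hI : I X = none) :
    AI Γ I X = canonA Γ X := by
  have h7 : ThmC' (Form.conj
      (Form.impl (Form.int (iEmpty S) (Form.eq X (canonA Γ X))) (Form.int I (Form.eq X (canonA Γ X))))
      (Form.impl (Form.int I (Form.eq X (canonA Γ X))) (Form.int (iEmpty S) (Form.eq X (canonA Γ X))))) :=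
    ThmC'.a7 I X (canonA Γ X) hexo hI
  have h0 : Form.int (iEmpty S) (Form.eq X (canonA Γ X)) ∈ Γ :=
    AI_spec hΓ (iEmpty S) X
  have hstep : ProvC' Γ (Form.int I (Form.eq X (canonA Γ X))) :=
    prov_mp (prov_mp (prov_of_thm (ThmC'.taut (taut_conj_left _ _))) (prov_of_thm h7))
      (prov_of_mem h0)
  exact AI_eq hΓ (mem_of_prov hΓ hstep (IsC'.intEq _ _ _))

lemma prov_step {I J : Intervention S} (W : S.Var)
    (hall : ∀ Z : S.Var, Form.int J (Form.eq Z (AI Γ I Z)) ∈ Γ) (Z : S.Var) :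
    Form.int (iUpd J W (AI Γ I W)) (Form.eq Z (AI Γ I Z)) ∈ Γ := by
  have h3 := ThmC'.a3 J W Z (AI Γ I W) (AI Γ I Z)
  exact mem_of_prov hΓ (prov_mp (prov_of_thm h3)
    (prov_conj (prov_of_mem (hall W)) (prov_of_mem (hall Z)))) (IsC'.intEq _ _ _)

lemma prov_fold (I : Intervention S) (l : List S.Var) :
    ∀ Z : S.Var,
      Form.int (l.foldr (fun W J => iUpd J W (AI Γ I W)) I) (Form.eq Z (AI Γ I Z)) ∈ Γ := by
  induction l with
  | nil => exact fun Z => AI_spec hΓ I Z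
  | cons W l ih => exact fun Z => prov_step hΓ W ih Z

omit hΓ

lemma fold_apply (Γ : Set (Form S)) (I : Intervention S) (l : List S.Var) (W : S.Var) :
    (l.foldr (fun W J => iUpd J W (AI Γ I W)) I) W
      = if W ∈ l then some (AI Γ I W) else I W := by
  induction l with
  | nil => simp
  | cons U l ih =>
      rw [List.foldr_cons]
      by_cases h : W = U
      · subst h; rw [iUpd, Function.update_self]; simp
      · rw [iUpd, Function.update_of_ne h, ih]; simp [h]

include hΓ

lemma intervenedVal_AI (I : Intervention S) :
    IntervenedVal (canonF Γ) (canonA Γ) I (AI Γ I) := by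
  refine ⟨fun X _ v hI => AI_of_some hΓ hI, fun X hexo hI => AI_of_none_exo hΓ hexo hI, ?_⟩
  intro V hV
  simp only [intF]
  cases hI : I V with
  | some v => simp [AI_of_some hΓ hI]
  | none =>
      simp only [Option.getD_none]
      symm
      apply canonF_eq hΓ
      set l : List S.Var := ((Finset.univ : Finset S.Var).filter (fun W => W ≠ V)).toList
        with hl
      have hJ : (l.foldr (fun W J => iUpd J W (AI Γ I W)) I)
          = fullIntOf ((AI Γ I).restrict V) := by
        funext W
        rw [fold_apply, fullIntOf]
        by_cases h : W = V
        · subst h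
          rw [dif_pos rfl, if_neg (by simp [hl])]
          exact hI
        · rw [dif_neg h, if_pos (by simp [hl, h])]
          rfl
      rw [← hJ]
      exact prov_fold hΓ I l V

lemma intVal_canon (I : Intervention S) :
    intVal (canonF Γ) (canonA Γ) I = AI Γ I := by
  have hex : ∃ A', IntervenedVal (canonF Γ) (canonA Γ) I A' :=
    ⟨AI Γ I, intervenedVal_AI hΓ I⟩
  have h1 : IntervenedVal (canonF Γ) (canonA Γ) I (intVal (canonF Γ) (canonA Γ) I) :=
    Classical.epsilon_spec hex
  exact intervenedVal_unique (recursive_canonF hΓ) h1 (intervenedVal_AI hΓ I)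

end Witness

/-- Theorem (canonical truth lemma for L′_C): the canonical recursive causal model
`⟨F^Γ, A^Γ⟩` satisfies an L′_C formula `γ` iff `γ ∈ Γ`. -/
theorem canonical_truth_lemma (S : Sig) (Γ : Set (Form S)) (hΓ : MCS Γ)
    (γ : Form S) (hγ : IsC' γ) :
    SatC γ (canonF Γ) (canonA Γ) ↔ γ ∈ Γ := by
  induction hγ with
  | intEq I Y y =>
      simp only [SatC]
      rw [intVal_canon hΓ]
      exact ⟨fun h => h ▸ AI_spec hΓ I Y, AI_eq hΓ⟩
  | @neg φ hφ ih =>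
      simp only [SatC]
      rw [ih]
      exact (negF_mem_iff hΓ hφ).symm
  | @conj φ ψ hφ hψ ih1 ih2 =>
      simp only [SatC]
      rw [ih1, ih2]
      exact (conj_mem_iff hΓ hφ hψ).symm
end
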